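/- arXiv:1706.00407 — 2 statements merged into one kernel-verified Lean document; each statement's English description precedes it below -/
import Mathlib

section
/- For every nonzero integer m and every positive integer n, F_{2m} * (sum over k from 1 to n of L_{mk}^4) = F_{2mn+m} (L_{2mn+m} + 4(-1)^{mn} L_m) + (6n-5) F_{2m}. -/
/-- Fibonacci numbers extended to all integers via `F_{-n} = (-1)^{n-1} F_n`. -/
def fibZ (n : ℤ) : ℤ :=
  if 0 ≤ n then (Nat.fib n.toNat : ℤ) else (-1) ^ ((-n).toNat + 1) * (Nat.fib (-n).toNat : ℤ)

/-- Lucas numbers extended to all integers, `L_n = F_{n-1} + F_{n+1}`. -/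
def lucasZ (n : ℤ) : ℤ := fibZ (n - 1) + fibZ (n + 1)

/-!
Both `F` and `L` satisfy the Fibonacci recurrence on all of `ℤ`, and a two-sided solution of
the recurrence is determined by its values at `0` and `1`. Comparing initial values gives, for
every such `g`, the addition formula `g 0 * L_b = g_b + (-1)^b g_{-b}`; specialised to shifts of
`F` and `L` it yields `F_a L_b = F_{a+b} + (-1)^b F_{a-b}` and `L_a L_b = L_{a+b} + (-1)^b L_{a-b}`.
With these, `L_j^4 = L_{4j} + 4(-1)^j L_{2j} + 6`, and the difference of the right-hand side
at `n + 1` and at `n` telescopes to `F_{2m} (L_{m(n+1)}^4 - 6)`. At `n = 0` the identity is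
`5 F_m L_m = 5 F_{2m}`.
-/

def IsFibonacciLike (g : ℤ → ℤ) : Prop := ∀ n, g (n + 2) = g (n + 1) + g n

namespace IsFibonacciLike

variable {g h : ℤ → ℤ}

theorem comp_add (hg : IsFibonacciLike g) (a : ℤ) : IsFibonacciLike (fun n => g (a + n)) := by
  intro n
  simp only [← add_assoc]
  exact hg (a + n)

theorem eq_of_zero_of_one (hg : IsFibonacciLike g) (hh : IsFibonacciLike h) (h0 : g 0 = h 0)
    (h1 : g 1 = h 1) : g = h := by
  have key : ∀ n : ℤ, g n = h n ∧ g (n + 1) = h (n + 1) := by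
    intro n
    induction n using Int.induction_on with
    | zero => exact ⟨h0, by simpa using h1⟩
    | succ i ih =>
      refine ⟨ih.2, ?_⟩
      rw [add_assoc, one_add_one_eq_two, hg, hh, ih.1, ih.2]
    | pred i ih =>
      refine ⟨?_, by simpa using ih.1⟩
      have hgi := hg (-i - 1)
      have hhi := hh (-i - 1)
      ring_nf at hgi hhi ih ⊢
      linarith
  funext n
  exact (key n).1

end IsFibonacciLike

theorem fibZ_natCast (k : ℕ) : fibZ k = Nat.fib k := by
  simp [fibZ]

theorem fibZ_neg_natCast (k : ℕ) : fibZ (-k) = (-1) ^ (k + 1) * Nat.fib k := by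
  rcases k with _ | k
  · simp [fibZ]
  · simp only [fibZ, if_neg (by omega : ¬ (0 : ℤ) ≤ -((k + 1 : ℕ) : ℤ)), neg_neg,
      Int.toNat_natCast]

theorem isFibonacciLike_fibZ : IsFibonacciLike fibZ := by
  intro n
  obtain ⟨k, rfl | rfl⟩ := Int.eq_nat_or_neg n
  · rw [show (k : ℤ) + 2 = (k + 2 : ℕ) by push_cast; ring,
      show (k : ℤ) + 1 = (k + 1 : ℕ) by push_cast; ring, fibZ_natCast, fibZ_natCast,
      fibZ_natCast, Nat.fib_add_two]
    push_cast; ring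
  · rcases k with _ | _ | k
    · simp [fibZ, Nat.fib_two]
    · simp [fibZ]
    · rw [show -((k + 2 : ℕ) : ℤ) + 2 = -(k : ℕ) by push_cast; ring,
        show -((k + 2 : ℕ) : ℤ) + 1 = -(k + 1 : ℕ) by push_cast; ring,
        fibZ_neg_natCast, fibZ_neg_natCast, fibZ_neg_natCast, Nat.fib_add_two]
      push_cast; ring

theorem fibZ_zero : fibZ 0 = 0 := by simp [fibZ]

theorem fibZ_neg (a : ℤ) : fibZ (-a) = -(a.negOnePow * fibZ a) := by
  obtain ⟨k, rfl | rfl⟩ := Int.eq_nat_or_neg a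
  · rw [fibZ_neg_natCast, fibZ_natCast, Int.coe_negOnePow_natCast]; ring
  · rw [neg_neg, Int.negOnePow_neg, fibZ_neg_natCast, fibZ_natCast, Int.coe_negOnePow_natCast]
    simp [pow_succ, ← mul_assoc, ← pow_add, ← two_mul, pow_mul]

theorem fibZ_neg_two_mul (a : ℤ) : fibZ (-(2 * a)) = -fibZ (2 * a) := by
  simp [fibZ_neg]

theorem isFibonacciLike_lucasZ : IsFibonacciLike lucasZ := by
  intro n
  have h₁ := isFibonacciLike_fibZ (n - 1)
  have h₂ := isFibonacciLike_fibZ (n + 1)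
  simp only [lucasZ]
  ring_nf at h₁ h₂ ⊢
  linarith

theorem lucasZ_zero : lucasZ 0 = 2 := by simp [lucasZ, fibZ]

theorem lucasZ_one : lucasZ 1 = 1 := by simp [lucasZ, fibZ, Nat.fib_two]

theorem IsFibonacciLike.mul_lucasZ {g : ℤ → ℤ} (hg : IsFibonacciLike g) (b : ℤ) :
    g 0 * lucasZ b = g b + b.negOnePow * g (-b) := by
  have hL : IsFibonacciLike (fun b => g 0 * lucasZ b) := fun n => by
    simp only [isFibonacciLike_lucasZ n]; ring
  have hR : IsFibonacciLike (fun b => g b + b.negOnePow * g (-b)) := fun n => by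
    have h₁ := hg n
    have h₂ := hg (-n - 2)
    simp only [show n + 2 = n + 1 + 1 by ring, Int.negOnePow_succ, neg_neg, Units.val_neg]
    ring_nf at h₁ h₂ ⊢
    linear_combination h₁ - (n.negOnePow : ℤ) * h₂
  refine congrFun (hL.eq_of_zero_of_one hR ?_ ?_) b
  · simp only [lucasZ_zero, Int.negOnePow_zero, Units.val_one, neg_zero]; ring
  · have h := hg (-1)
    simp only [lucasZ_one, Int.negOnePow_one]
    norm_num at h ⊢
    linarith

theorem fibZ_mul_lucasZ (a b : ℤ) :
    fibZ a * lucasZ b = fibZ (a + b) + b.negOnePow * fibZ (a - b) := by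
  simpa [sub_eq_add_neg] using (isFibonacciLike_fibZ.comp_add a).mul_lucasZ b

theorem lucasZ_mul_lucasZ (a b : ℤ) :
    lucasZ a * lucasZ b = lucasZ (a + b) + b.negOnePow * lucasZ (a - b) := by
  simpa [sub_eq_add_neg] using (isFibonacciLike_lucasZ.comp_add a).mul_lucasZ b

theorem fibZ_mul_lucasZ_self (a : ℤ) : fibZ a * lucasZ a = fibZ (2 * a) := by
  rw [fibZ_mul_lucasZ, sub_self, fibZ_zero, two_mul, mul_zero, add_zero]

theorem lucasZ_sq (a : ℤ) : lucasZ a ^ 2 = lucasZ (2 * a) + 2 * a.negOnePow := by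
  rw [sq, lucasZ_mul_lucasZ, sub_self, lucasZ_zero, two_mul]; ring

theorem lucasZ_pow_four (a : ℤ) :
    lucasZ a ^ 4 = lucasZ (4 * a) + 4 * a.negOnePow * lucasZ (2 * a) + 6 := by
  have h := lucasZ_sq (2 * a)
  rw [Int.negOnePow_two_mul, Units.val_one, ← mul_assoc, show (2 : ℤ) * 2 = 4 by norm_num] at h
  have hs := Int.units_coe_mul_self a.negOnePow
  rw [show lucasZ a ^ 4 = (lucasZ a ^ 2) ^ 2 by ring, lucasZ_sq]
  linear_combination h + 4 * hs

theorem fibZ_two_mul_mul_lucasZ_two_mul (a b : ℤ) :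
    fibZ (2 * a) * lucasZ (2 * b) = fibZ (2 * b + 2 * a) - fibZ (2 * b - 2 * a) := by
  rw [fibZ_mul_lucasZ, Int.negOnePow_two_mul, Units.val_one, one_mul, add_comm (2 * a),
    show 2 * a - 2 * b = -(2 * b - 2 * a) by ring, ← mul_sub, fibZ_neg_two_mul, ← sub_eq_add_neg]

theorem fibZ_mul_lucasZ_pow_four_add (m j : ℤ) :
    fibZ (2 * m) * lucasZ j ^ 4
        + fibZ (2 * j - m) * (lucasZ (2 * j - m) + 4 * (j - m).negOnePow * lucasZ m)
      = fibZ (2 * j + m) * (lucasZ (2 * j + m) + 4 * j.negOnePow * lucasZ m)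
        + 6 * fibZ (2 * m) := by
  have e₁ := fibZ_two_mul_mul_lucasZ_two_mul m (2 * j)
  have e₂ := fibZ_two_mul_mul_lucasZ_two_mul m j
  have e₃ := fibZ_mul_lucasZ_self (2 * j + m)
  have e₄ := fibZ_mul_lucasZ_self (2 * j - m)
  have e₅ := fibZ_mul_lucasZ (2 * j + m) m
  have e₆ := fibZ_mul_lucasZ (2 * j - m) m
  have hs := Int.units_coe_mul_self m.negOnePow
  rw [lucasZ_pow_four, Int.negOnePow_sub, Units.val_mul]
  linear_combination (norm := ring_nf) e₁ + 4 * j.negOnePow * e₂ + e₄ - e₃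
    + 4 * j.negOnePow * m.negOnePow * e₆ - 4 * j.negOnePow * e₅
    + 4 * j.negOnePow * fibZ (2 * j - 2 * m) * hs

theorem stmt10_general (m : ℤ) (n : ℕ) :
    fibZ (2 * m) * ∑ k ∈ Finset.Icc 1 n, lucasZ (m * k) ^ 4
      = fibZ (2 * m * n + m) * (lucasZ (2 * m * n + m) + 4 * ((((-1 : ℤˣ) ^ (m * n) : ℤˣ)) : ℤ) * lucasZ m)
        + (6 * n - 5) * fibZ (2 * m) := by
  rw [← Int.negOnePow_def]
  induction n with
  | zero =>
    simp only [Finset.Icc_eq_empty_of_lt one_pos, Finset.sum_empty, CharP.cast_eq_zero,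
      mul_zero, Int.negOnePow_zero, Units.val_one]
    linear_combination (norm := ring_nf) -5 * fibZ_mul_lucasZ_self m
  | succ n ih =>
    rw [Finset.sum_Icc_succ_top (by omega), mul_add, ih]
    push_cast
    linear_combination (norm := ring_nf) fibZ_mul_lucasZ_pow_four_add m (m * (n + 1))

theorem stmt10 (m : ℤ) (hm : m ≠ 0) (n : ℕ) (hn : 0 < n) :
    fibZ (2 * m) * ∑ k ∈ Finset.Icc 1 n, lucasZ (m * k) ^ 4
      = fibZ (2 * m * n + m) * (lucasZ (2 * m * n + m) + 4 * ((((-1 : ℤˣ) ^ (m * n) : ℤˣ)) : ℤ) * lucasZ m)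
        + (6 * n - 5) * fibZ (2 * m) :=
  stmt10_general m n
end

section
/- For all integers m and all positive integers n, 5 L_m L_{2m} * (sum over k from 1 to n of (-1)^{k-1} F_{mk}^4) = F_{mn} F_{mn+m} * ((-1)^{n-1} L_m L_{mn} L_{mn+m} + 4(-1)^{n(m-1)} L_{2m}). -/
open Finset
open scoped goldenRatio

section

variable {R : Type*} [CommRing R] (A B : R)

def quarticClosedForm (n : ℕ) : R :=
  (A ^ n - B ^ n) * (A ^ (n + 1) - B ^ (n + 1))
    * ((A + B) * (A ^ n + B ^ n) * (A ^ (n + 1) + B ^ (n + 1)) - 4 * (A * B) ^ n * (A ^ 2 + B ^ 2))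

@[simp]
lemma quarticClosedForm_zero : quarticClosedForm A B 0 = 0 := by
  simp [quarticClosedForm]

variable {A B}

/- Modulo `(A * B) ^ 2 = 1` this combines `f (2n+4) + f (2n) = f (2n+2) * l 2`,
`A * B * f (n+2) + f n = A * B * f (n+1) * l 1` and
`l (n+1) ^ 2 - f (n+1) ^ 2 = 4 * (A * B) ^ (n+1)`. -/
lemma quarticClosedForm_succ_add (h : (A * B) ^ 2 = 1) (n : ℕ) :
    quarticClosedForm A B (n + 1) + quarticClosedForm A B n
      = (A + B) * (A ^ 2 + B ^ 2) * (A ^ (n + 1) - B ^ (n + 1)) ^ 4 := by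
  unfold quarticClosedForm
  linear_combination (-(A ^ (n + 1) - B ^ (n + 1)) * ((A + B) * (A ^ (n + 1) + B ^ (n + 1))
      * (A ^ (2 * n) - B ^ (2 * n)) - 4 * (A ^ 2 + B ^ 2) * (A * B) ^ n * (A ^ n - B ^ n))) * h

lemma mul_sum_neg_one_pow_mul_pow_sub_pow_four (h : (A * B) ^ 2 = 1) (n : ℕ) :
    (A + B) * (A ^ 2 + B ^ 2) * ∑ k ∈ Icc 1 n, (-1) ^ (k + 1) * (A ^ k - B ^ k) ^ 4
      = (-1) ^ (n + 1) * quarticClosedForm A B n := by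
  induction n with
  | zero => simp
  | succ n ih =>
    rw [sum_Icc_succ_top (by omega), mul_add, ih]
    linear_combination (-1) ^ (n + 1) * quarticClosedForm_succ_add h n

end

theorem fibZ_eq_intFib : fibZ = Int.fib := by
  ext n
  obtain ⟨j, rfl | rfl⟩ := n.eq_nat_or_neg
  · simp [fibZ]
  · simp [fibZ, Int.fib_neg_natCast]

theorem coe_lucasZ_eq (t : ℤ) : (lucasZ t : ℝ) = φ ^ t + ψ ^ t := by
  rw [lucasZ, fibZ_eq_intFib, Int.cast_add, Real.coe_intFib_eq, Real.coe_intFib_eq,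
    zpow_sub_one₀ Real.goldenRatio_ne_zero, zpow_sub_one₀ Real.goldenConj_ne_zero,
    zpow_add_one₀ Real.goldenRatio_ne_zero, zpow_add_one₀ Real.goldenConj_ne_zero,
    Real.inv_goldenRatio, Real.inv_goldenConj]
  field_simp
  linear_combination (φ ^ t + ψ ^ t) * Real.goldenRatio_sub_goldenConj

theorem coe_fibZ_mul_natCast (m : ℤ) (k : ℕ) :
    (fibZ (m * k) : ℝ) = ((φ ^ m) ^ k - (ψ ^ m) ^ k) / √5 := by
  rw [fibZ_eq_intFib, Real.coe_intFib_eq, zpow_mul, zpow_mul, zpow_natCast, zpow_natCast]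

theorem coe_lucasZ_mul_natCast (m : ℤ) (k : ℕ) :
    (lucasZ (m * k) : ℝ) = (φ ^ m) ^ k + (ψ ^ m) ^ k := by
  rw [coe_lucasZ_eq, zpow_mul, zpow_mul, zpow_natCast, zpow_natCast]

theorem goldenRatio_zpow_mul_goldenConj_zpow (m : ℤ) : φ ^ m * ψ ^ m = (-1) ^ m := by
  rw [← mul_zpow, Real.goldenRatio_mul_goldenConj]

theorem goldenRatio_zpow_mul_goldenConj_zpow_sq (m : ℤ) : (φ ^ m * ψ ^ m) ^ 2 = 1 := by
  rw [goldenRatio_zpow_mul_goldenConj_zpow, ← zpow_natCast, ← zpow_mul, mul_comm, zpow_mul]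
  norm_num

theorem cast_neg_one_zpow_natCast_sub_one (k : ℕ) :
    ((((-1 : ℤˣ) ^ ((k : ℤ) - 1) : ℤˣ) : ℤ) : ℝ) = (-1) ^ (k + 1) := by
  rw [← Int.negOnePow_def, Int.cast_negOnePow, zpow_sub_one₀ (by norm_num), zpow_natCast]
  simp [pow_succ]

theorem cast_neg_one_zpow_mul_sub_one (m : ℤ) (n : ℕ) :
    ((((-1 : ℤˣ) ^ ((n : ℤ) * (m - 1)) : ℤˣ) : ℤ) : ℝ) = (-(φ ^ m * ψ ^ m)) ^ n := by
  rw [← Int.negOnePow_def, Int.cast_negOnePow, mul_comm, zpow_mul, zpow_natCast,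
    zpow_sub_one₀ (by norm_num), goldenRatio_zpow_mul_goldenConj_zpow]
  simp

theorem stmt13_general (m : ℤ) (n : ℕ) :
    5 * lucasZ m * lucasZ (2 * m)
        * ∑ k ∈ Finset.Icc 1 n, (((-1 : ℤˣ) ^ ((k : ℤ) - 1) : ℤˣ) : ℤ) * fibZ (m * k) ^ 4
      = fibZ (m * n) * fibZ (m * n + m)
        * ((((-1 : ℤˣ) ^ ((n : ℤ) - 1) : ℤˣ) : ℤ) * lucasZ m * lucasZ (m * n) * lucasZ (m * n + m)
            + 4 * (((-1 : ℤˣ) ^ ((n : ℤ) * (m - 1)) : ℤˣ) : ℤ) * lucasZ (2 * m)) := by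
  have hsum :
      ∑ k ∈ Icc 1 n, ((((-1 : ℤˣ) ^ ((k : ℤ) - 1) : ℤˣ) : ℤ) : ℝ) * (fibZ (m * k) : ℝ) ^ 4
        = (∑ k ∈ Icc 1 n, (-1) ^ (k + 1) * ((φ ^ m) ^ k - (ψ ^ m) ^ k) ^ 4) / 25 := by
    have h25 : √5 ^ 4 = 25 := by
      linear_combination (√5 ^ 2 + 5) * Real.sq_sqrt (show (0 : ℝ) ≤ 5 by norm_num)
    rw [sum_div]
    refine sum_congr rfl fun k _ => ?_
    rw [cast_neg_one_zpow_natCast_sub_one, coe_fibZ_mul_natCast, div_pow, h25, mul_div_assoc]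
  have hmn : m * n + m = m * ((n + 1 : ℕ) : ℤ) := by push_cast; ring
  have hlucas_one : lucasZ m = lucasZ (m * (1 : ℕ)) := by simp
  have hlucas_two : lucasZ (2 * m) = lucasZ (m * (2 : ℕ)) := by rw [mul_comm]; rfl
  rw [← Int.cast_inj (α := ℝ)]
  push_cast
  rw [hsum, hmn, hlucas_one, hlucas_two, cast_neg_one_zpow_natCast_sub_one,
    cast_neg_one_zpow_mul_sub_one, coe_fibZ_mul_natCast, coe_fibZ_mul_natCast,
    coe_lucasZ_mul_natCast, coe_lucasZ_mul_natCast, coe_lucasZ_mul_natCast, coe_lucasZ_mul_natCast,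
    div_mul_div_comm, Real.mul_self_sqrt (by norm_num), neg_pow]
  have key := mul_sum_neg_one_pow_mul_pow_sub_pow_four (goldenRatio_zpow_mul_goldenConj_zpow_sq m) n
  unfold quarticClosedForm at key
  linear_combination key / 5

theorem stmt13 (m : ℤ) (n : ℕ) (hn : 0 < n) :
    5 * lucasZ m * lucasZ (2 * m)
        * ∑ k ∈ Finset.Icc 1 n, (((-1 : ℤˣ) ^ ((k : ℤ) - 1) : ℤˣ) : ℤ) * fibZ (m * k) ^ 4
      = fibZ (m * n) * fibZ (m * n + m)
        * ((((-1 : ℤˣ) ^ ((n : ℤ) - 1) : ℤˣ) : ℤ) * lucasZ m * lucasZ (m * n) * lucasZ (m * n + m)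
            + 4 * (((-1 : ℤˣ) ^ ((n : ℤ) * (m - 1)) : ℤˣ) : ℤ) * lucasZ (2 * m)) :=
  stmt13_general m n
end
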